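/- arXiv:2604.23104 — 2 statements merged into one kernel-verified Lean document; each statement's English description precedes it below -/
import Mathlib

section
/- Let A be a partially observed real n1×n2 matrix with observation set Ω, all observed entries nonzero. Let G(V1,V2,Ω) be the bipartite graph with vertex parts [n1] and [n2] and edge set Ω. If G(V1,V2,Ω) is connected, then every nontrivial (nonzero) solution x ∈ R^{S1} of the linear system A_{ij} x_{i'} − A_{i'j} x_i = 0 (for all (i,j),(i',j) ∈ Ω, i < i') has all entries nonzero. -/
open Classical

noncomputable section

/-- The set of row indices appearing in the observation set `Ω`. -/
def S1 {n1 n2 : ℕ} (Ω : Set (Fin n1 × Fin n2)) : Set (Fin n1) :=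
  {i | ∃ j, (i, j) ∈ Ω}

/-- The solution space of the linear system
`A_{ij} x_{i'} − A_{i'j} x_i = 0` for all `(i,j), (i',j) ∈ Ω`,
in the variables `x ∈ ℝ^{S1}`. -/
def solSpace {n1 n2 : ℕ} (A : Matrix (Fin n1) (Fin n2) ℝ)
    (Ω : Set (Fin n1 × Fin n2)) : Submodule ℝ (↥(S1 Ω) → ℝ) where
  carrier := {x | ∀ (i i' : ↥(S1 Ω)) (j : Fin n2),
    (i.1, j) ∈ Ω → (i'.1, j) ∈ Ω → A i.1 j * x i' - A i'.1 j * x i = 0}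
  add_mem' := by
    intro x y hx hy i i' j h1 h2
    simp only [Set.mem_setOf_eq, Pi.add_apply] at *
    linear_combination hx i i' j h1 h2 + hy i i' j h1 h2
  zero_mem' := by
    intro i i' j h1 h2
    simp
  smul_mem' := by
    intro c x hx i i' j h1 h2
    simp only [Set.mem_setOf_eq, Pi.smul_apply, smul_eq_mul] at *
    linear_combination c * hx i i' j h1 h2

/-- `(A, Ω)` is rank one extractable if the solution space of the system
`A_{ij} x_{i'} − A_{i'j} x_i = 0` is one-dimensional. -/
def Extractable {n1 n2 : ℕ} (A : Matrix (Fin n1) (Fin n2) ℝ)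
    (Ω : Set (Fin n1 × Fin n2)) : Prop :=
  Module.finrank ℝ (solSpace A Ω) = 1

/-- `(A, Ω)` is rank one completable if `A_{ij} = a_i b_j` on `Ω` for some vectors `a, b`. -/
def Completable {n1 n2 : ℕ} (A : Matrix (Fin n1) (Fin n2) ℝ)
    (Ω : Set (Fin n1 × Fin n2)) : Prop :=
  ∃ (a : Fin n1 → ℝ) (b : Fin n2 → ℝ), ∀ p ∈ Ω, A p.1 p.2 = a p.1 * b p.2

/-- The bipartite graph with vertex parts `V1`, `V2` and edge set `E ⊆ V1 × V2`. -/
def biGraph {V1 V2 : Type*} (E : Set (V1 × V2)) : SimpleGraph (V1 ⊕ V2) where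
  Adj u v := (∃ i j, (i, j) ∈ E ∧ u = Sum.inl i ∧ v = Sum.inr j) ∨
             (∃ i j, (i, j) ∈ E ∧ u = Sum.inr j ∧ v = Sum.inl i)
  symm := by
    refine ⟨?_⟩
    rintro u v (⟨i, j, h, rfl, rfl⟩ | ⟨i, j, h, rfl, rfl⟩)
    · exact Or.inr ⟨i, j, h, rfl, rfl⟩
    · exact Or.inl ⟨i, j, h, rfl, rfl⟩
  loopless := by
    refine ⟨?_⟩
    rintro u (⟨i, j, h, rfl, h2⟩ | ⟨i, j, h, rfl, h2⟩) <;> simp at h2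

end

theorem stmt2 {n1 n2 : ℕ} (A : Matrix (Fin n1) (Fin n2) ℝ) (Ω : Set (Fin n1 × Fin n2))
    (hA : ∀ p ∈ Ω, A p.1 p.2 ≠ 0)
    (hconn : (biGraph Ω).Connected) :
    ∀ x ∈ solSpace A Ω, x ≠ 0 → ∀ i, x i ≠ 0 := by
  intro x hx hx0 i0 hxi0
  -- propagation predicate
  set P : (Fin n1 ⊕ Fin n2) → Prop := fun v =>
    match v with
    | Sum.inl i => ∀ h : i ∈ S1 Ω, x ⟨i, h⟩ = 0
    | Sum.inr j => ∀ i, ∀ h : (i, j) ∈ Ω, x ⟨i, ⟨j, h⟩⟩ = 0 with hP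
  have step : ∀ u v, (biGraph Ω).Adj u v → P u → P v := by
    rintro u v (⟨i, j, hij, rfl, rfl⟩ | ⟨i, j, hij, rfl, rfl⟩) hu
    · -- inl i → inr j
      intro i' hi'
      have hxi : x ⟨i, ⟨j, hij⟩⟩ = 0 := hu ⟨j, hij⟩
      have heq := hx ⟨i, ⟨j, hij⟩⟩ ⟨i', ⟨j, hi'⟩⟩ j hij hi'
      have hAij : A i j ≠ 0 := hA (i, j) hij
      have : A i j * x ⟨i', ⟨j, hi'⟩⟩ = 0 := by
        have h2 : A i' j * x ⟨i, ⟨j, hij⟩⟩ = 0 := by rw [hxi]; ring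
        linarith [heq]
      exact (mul_eq_zero.mp this).resolve_left hAij
    · -- inr j → inl i
      intro h
      have := hu i hij
      convert this using 2
  have reach : ∀ u v, (biGraph Ω).Reachable u v → P u → P v := by
    intro u v hr
    obtain ⟨w⟩ := hr
    induction w with
    | nil => exact id
    | cons h p ih => exact fun hu => ih (step _ _ h hu)
  -- start: P (inl i0)
  have hPi0 : P (Sum.inl i0.1) := by
    intro h
    have : (⟨i0.1, h⟩ : ↥(S1 Ω)) = i0 := Subtype.ext rfl
    rw [this]; exact hxi0
  -- x ≠ 0 gives some nonzero coordinate
  obtain ⟨i1, hi1⟩ : ∃ i1 : ↥(S1 Ω), x i1 ≠ 0 := by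
    by_contra h
    push_neg at h
    exact hx0 (funext fun i => h i)
  have hr := hconn (Sum.inl i0.1) (Sum.inl i1.1)
  have hP1 := reach _ _ hr hPi0
  exact hi1 (by simpa using hP1 i1.2)
end

section
/- Let A be a partially observed real n1×n2 matrix with observation set Ω, all observed entries nonzero, such that the bipartite graph G(V1,V2,Ω) is connected. Then (A,Ω) is rank one extractable if and only if (A^T, Ω') is rank one extractable, where Ω' = {(j,i) : (i,j) ∈ Ω}. -/
open Classical

section Aux

variable {n1 n2 : ℕ}

/-- zero propagation -/
lemma zero_propagates (A : Matrix (Fin n1) (Fin n2) ℝ) (Ω : Set (Fin n1 × Fin n2))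
    (hA : ∀ p ∈ Ω, A p.1 p.2 ≠ 0) (hconn : (biGraph Ω).Connected)
    {x : ↥(S1 Ω) → ℝ} (hx : x ∈ solSpace A Ω)
    (i0 : ↥(S1 Ω)) (h0 : x i0 = 0) : x = 0 := by
  classical
  set P : Fin n1 ⊕ Fin n2 → Prop :=
    fun u => match u with
      | Sum.inl i => ∀ h : i ∈ S1 Ω, x ⟨i, h⟩ = 0
      | Sum.inr j => ∀ i, ∀ hij : (i, j) ∈ Ω, x ⟨i, ⟨j, hij⟩⟩ = 0 with hP
  have step : ∀ u v, (biGraph Ω).Adj u v → P u → P v := by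
    rintro u v (⟨i, j, hij, rfl, rfl⟩ | ⟨i, j, hij, rfl, rfl⟩) hu
    · intro i' hi'j
      have hc := hx ⟨i, ⟨j, hij⟩⟩ ⟨i', ⟨j, hi'j⟩⟩ j hij hi'j
      have hz : x ⟨i, ⟨j, hij⟩⟩ = 0 := hu ⟨j, hij⟩
      have hAne : A i j ≠ 0 := hA (i, j) hij
      have hc' : A i j * x ⟨i', ⟨j, hi'j⟩⟩ - A i' j * x ⟨i, ⟨j, hij⟩⟩ = 0 := hc
      have : A i j * x ⟨i', ⟨j, hi'j⟩⟩ = 0 := by linear_combination hc' + A i' j * hz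
      exact (mul_eq_zero.mp this).resolve_left hAne
    · intro h
      have := hu i hij
      convert this using 2
  have reach : ∀ u v, (biGraph Ω).Reachable u v → P u → P v := by
    intro u v h
    obtain ⟨w⟩ := h
    induction w with
    | nil => exact id
    | cons h p ih => intro hu; exact ih (step _ _ h hu)
  funext i
  have hPi0 : P (Sum.inl i0.1) := by
    intro h
    have : (⟨i0.1, h⟩ : ↥(S1 Ω)) = i0 := Subtype.ext rfl
    rw [this]; exact h0
  have := reach _ _ (hconn.preconnected (Sum.inl i0.1) (Sum.inl i.1)) hPi0
  have h2 := this i.2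
  have : (⟨i.1, i.2⟩ : ↥(S1 Ω)) = i := Subtype.ext rfl
  rw [this] at h2
  simpa using h2

/-- dim ≤ 1 under connectivity. -/
lemma solSpace_finrank_le_one (A : Matrix (Fin n1) (Fin n2) ℝ) (Ω : Set (Fin n1 × Fin n2))
    (hA : ∀ p ∈ Ω, A p.1 p.2 ≠ 0) (hconn : (biGraph Ω).Connected)
    (i0 : ↥(S1 Ω)) : Module.finrank ℝ (solSpace A Ω) ≤ 1 := by
  classical
  let f : (solSpace A Ω) →ₗ[ℝ] ℝ :=
    { toFun := fun x => x.1 i0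
      map_add' := by intros; rfl
      map_smul' := by intros; rfl }
  have hf : Function.Injective f := by
    rw [injective_iff_map_eq_zero]
    intro x hx0
    have : x.1 = 0 := zero_propagates A Ω hA hconn x.2 i0 hx0
    exact Subtype.ext this
  calc Module.finrank ℝ (solSpace A Ω) ≤ Module.finrank ℝ ℝ :=
        LinearMap.finrank_le_finrank_of_injective hf
    _ = 1 := Module.finrank_self ℝ

lemma key (A : Matrix (Fin n1) (Fin n2) ℝ) (Ω : Set (Fin n1 × Fin n2))
    (hA : ∀ p ∈ Ω, A p.1 p.2 ≠ 0) (hconn : (biGraph Ω).Connected) :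
    Extractable A Ω ↔ (Ω.Nonempty ∧ Completable A Ω) := by
  classical
  constructor
  · intro h
    unfold Extractable at h
    have hpos : 0 < Module.finrank ℝ (solSpace A Ω) := by omega
    have hnt : Nontrivial (solSpace A Ω) := Module.nontrivial_of_finrank_pos hpos
    obtain ⟨x, hxne⟩ := exists_ne (0 : solSpace A Ω)
    have hx1 : x.1 ≠ 0 := fun hh => hxne (Subtype.ext hh)
    -- S1 nonempty
    have hS1 : (S1 Ω).Nonempty := by
      by_contra hemp
      rw [Set.not_nonempty_iff_eq_empty] at hemp
      have : IsEmpty ↥(S1 Ω) := by rw [hemp]; infer_instance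
      exact hx1 (funext fun i => (this.false i).elim)
    obtain ⟨i1, hi1⟩ := hS1
    obtain ⟨j1, hj1⟩ := hi1
    refine ⟨⟨(i1, j1), hj1⟩, ?_⟩
    -- x is nowhere zero
    have hnz : ∀ i : ↥(S1 Ω), x.1 i ≠ 0 := by
      intro i hzi
      exact hx1 (zero_propagates A Ω hA hconn x.2 i hzi)
    -- construct a, b
    refine ⟨fun i => if h : i ∈ S1 Ω then x.1 ⟨i, h⟩ else 0,
      fun j => if h : ∃ i, (i, j) ∈ Ω then A h.choose j / x.1 ⟨h.choose, ⟨j, h.choose_spec⟩⟩ else 0,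
      ?_⟩
    rintro ⟨i, j⟩ hij
    have hiS : i ∈ S1 Ω := ⟨j, hij⟩
    have hex : ∃ i', (i', j) ∈ Ω := ⟨i, hij⟩
    simp only [dif_pos hiS, dif_pos hex]
    set i' := hex.choose with hi'
    have hi'j : (i', j) ∈ Ω := hex.choose_spec
    have hc := x.2 ⟨i', ⟨j, hi'j⟩⟩ ⟨i, ⟨j, hij⟩⟩ j hi'j hij
    have hne : x.1 ⟨i', ⟨j, hi'j⟩⟩ ≠ 0 := hnz _
    show A i j = x.1 ⟨i, hiS⟩ * (A i' j / x.1 ⟨i', ⟨j, hi'j⟩⟩)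
    rw [mul_div_assoc', eq_div_iff hne]
    have hc' : A i' j * x.1 ⟨i, ⟨j, hij⟩⟩ - A i j * x.1 ⟨i', ⟨j, hi'j⟩⟩ = 0 := hc
    linear_combination -hc'
  · rintro ⟨⟨⟨i1, j1⟩, hij1⟩, a, b, hab⟩
    have hi1 : i1 ∈ S1 Ω := ⟨j1, hij1⟩
    have hle := solSpace_finrank_le_one A Ω hA hconn ⟨i1, hi1⟩
    have hxmem : (fun i : ↥(S1 Ω) => a i.1) ∈ solSpace A Ω := by
      intro i i' j h1 h2
      have e1 := hab (i.1, j) h1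
      have e2 := hab (i'.1, j) h2
      simp only at e1 e2
      rw [e1, e2]; ring
    have hane : a i1 ≠ 0 := fun hz =>
      hA (i1, j1) hij1 (by rw [hab (i1, j1) hij1, hz, zero_mul])
    have hxne : (⟨fun i : ↥(S1 Ω) => a i.1, hxmem⟩ : solSpace A Ω) ≠ 0 := by
      intro hz
      have : (fun i : ↥(S1 Ω) => a i.1) = 0 := congrArg Subtype.val hz
      have := congrFun this ⟨i1, hi1⟩
      exact hane this
    have hnt : Nontrivial (solSpace A Ω) := ⟨_, _, hxne⟩
    have hpos : 0 < Module.finrank ℝ (solSpace A Ω) := Module.finrank_pos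
    unfold Extractable
    omega

end Aux

theorem stmt9 {n1 n2 : ℕ} (A : Matrix (Fin n1) (Fin n2) ℝ) (Ω : Set (Fin n1 × Fin n2))
    (hA : ∀ p ∈ Ω, A p.1 p.2 ≠ 0)
    (hconn : (biGraph Ω).Connected) :
    Extractable A Ω ↔
      Extractable A.transpose {p : Fin n2 × Fin n1 | (p.2, p.1) ∈ Ω} := by
  classical
  set Ω' : Set (Fin n2 × Fin n1) := {p : Fin n2 × Fin n1 | (p.2, p.1) ∈ Ω} with hΩ'
  have hA' : ∀ p ∈ Ω', A.transpose p.1 p.2 ≠ 0 := by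
    rintro ⟨j, i⟩ hp
    exact hA (i, j) hp
  have iso : biGraph Ω' ≃g biGraph Ω := by
    refine ⟨Equiv.sumComm (Fin n2) (Fin n1), ?_⟩
    rintro (j | i) (j' | i') <;>
      constructor <;>
      rintro (⟨i, j'', h, h1, h2⟩ | ⟨i, j'', h, h1, h2⟩) <;>
      simp_all [biGraph, Equiv.sumComm] <;>
      tauto
  have hconn' : (biGraph Ω').Connected := iso.connected_iff.mpr hconn
  rw [key A Ω hA hconn, key A.transpose Ω' hA' hconn']
  constructor
  · rintro ⟨⟨⟨i, j⟩, hij⟩, a, b, hab⟩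
    refine ⟨⟨(j, i), hij⟩, b, a, ?_⟩
    rintro ⟨j', i'⟩ hp
    have := hab (i', j') hp
    simpa [Matrix.transpose_apply, mul_comm] using this
  · rintro ⟨⟨⟨j, i⟩, hij⟩, b, a, hab⟩
    refine ⟨⟨(i, j), hij⟩, a, b, ?_⟩
    rintro ⟨i', j'⟩ hp
    have := hab (j', i') hp
    simpa [Matrix.transpose_apply, mul_comm] using this
end
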